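/- For a partial word u in {0,1,DIAMOND}^L, define enc(u) = e(u[1]) e(u[2]) ... e(u[L]) over the alphabet {0,1,#}, where e(0) = 0#, e(1) = 1#, and e(DIAMOND) = 01#. Then a word a_1 a_2 ... a_L in {0,1}^L is compatible with u if and only if a_1 # a_2 # ... a_L # is a subsequence of enc(u). -/

import Mathlib

open List

/-- The alphabet {0, 1, #}. -/
inductive Letter3 : Type
  | zero : Letter3
  | one : Letter3
  | hash : Letter3
deriving DecidableEq

/-- The letter of `Letter3` corresponding to a Boolean value. -/
def lit : Bool → Letter3
  | false => .zero
  | true => .one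

/-- The encoding of a symbol of a partial word (where `none` plays the role of `DIAMOND`):
`e(0) = 0#`, `e(1) = 1#`, `e(DIAMOND) = 01#`. -/
def e : Option Bool → List Letter3
  | some false => [.zero, .hash]
  | some true => [.one, .hash]
  | none => [.zero, .one, .hash]

/-!
Both words consist of `L` blocks, each ending in the only `#` of the block. Since they contain
the same number of `#`s, an embedding of one into the other must match the `j`-th `#` with the
`j`-th `#`, so it splits blockwise: `a_j` embeds into `e(u_j)` minus its `#`, which is `u_j` if
`u_j ≠ DIAMOND` and `01` otherwise.
-/

namespace List

variable {α : Type*} [BEq α] [LawfulBEq α] {s : α}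

theorem append_cons_sublist_append_cons {p q r t : List α} (hq : s ∉ q)
    (hcount : count s t ≤ count s r) (h : p ++ s :: r <+ q ++ s :: t) : p <+ q ∧ r <+ t := by
  induction q generalizing p with
  | nil =>
    cases p with
    | nil => exact ⟨Sublist.slnil, cons_sublist_cons.1 h⟩
    | cons x p =>
      -- `s :: r` would have to embed into `t`, which has fewer `s`
      have := h.tail.count_le s
      simp only [cons_append, tail_cons, count_append, count_cons_self, nil_append] at this
      omega
  | cons y q ih =>
    have hy : s ≠ y := fun hsy => hq (hsy ▸ mem_cons_self)
    have hq : s ∉ q := fun hs => hq (mem_cons_of_mem y hs)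
    cases p with
    | nil =>
      cases h with
      | cons _ h => exact ⟨nil_sublist _, (ih hq h).2⟩
      | cons_cons _ h => exact absurd rfl hy
    | cons x p =>
      cases h with
      | cons _ h => exact (ih hq h).imp (·.cons y) id
      | cons_cons _ h => exact (ih hq h).imp (·.cons_cons _) id

theorem count_flatten_ofFn_append_singleton {n : ℕ} (p : Fin n → List α) :
    count s (ofFn fun j => p j ++ [s]).flatten = ∑ j, count s (p j) + n := by
  simp [count_flatten, sum_ofFn, Finset.sum_add_distrib]

theorem flatten_ofFn_append_singleton_sublist_iff {n : ℕ} {p q : Fin n → List α}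
    (hq : ∀ j, s ∉ q j) :
    (ofFn fun j => p j ++ [s]).flatten <+ (ofFn fun j => q j ++ [s]).flatten ↔
      ∀ j, p j <+ q j := by
  induction n with
  | zero => simp
  | succ n ih =>
    have ih := @ih (fun j => p j.succ) (fun j => q j.succ) (fun j => hq j.succ)
    simp only [ofFn_succ, flatten_cons, append_assoc, singleton_append, Fin.forall_fin_succ]
    constructor
    · intro h
      have hcount : count s (ofFn fun j => q j.succ ++ [s]).flatten ≤
          count s (ofFn fun j => p j.succ ++ [s]).flatten := by
        rw [count_flatten_ofFn_append_singleton, count_flatten_ofFn_append_singleton,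
          Finset.sum_eq_zero fun j _ => count_eq_zero.2 (hq j.succ)]
        omega
      obtain ⟨h0, hrest⟩ := append_cons_sublist_append_cons (hq 0) hcount h
      exact ⟨h0, ih.1 hrest⟩
    · rintro ⟨h0, hrest⟩
      exact h0.append ((ih.2 hrest).cons_cons s)

end List

def ePrefix : Option Bool → List Letter3
  | some b => [lit b]
  | none => [.zero, .one]

theorem e_eq_ePrefix_append (o : Option Bool) : e o = ePrefix o ++ [.hash] := by
  rcases o with _ | _ | _ <;> rfl

theorem hash_not_mem_ePrefix (o : Option Bool) : Letter3.hash ∉ ePrefix o := by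
  rcases o with _ | _ | _ <;> simp [ePrefix, lit]

theorem singleton_lit_sublist_ePrefix_iff (b : Bool) (o : Option Bool) :
    [lit b] <+ ePrefix o ↔ ∀ c, o = some c → b = c := by
  rcases o with _ | _ | _ <;> cases b <;> simp [ePrefix, lit]

/-- A word `a_1 ... a_L ∈ {0,1}^L` is compatible with a partial word
`u ∈ {0,1,DIAMOND}^L` iff `a_1 # a_2 # ... a_L #` is a subsequence of
`enc(u) = e(u[1]) ... e(u[L])`. -/
theorem compatible_iff_sublist_enc {L : ℕ} (u : Fin L → Option Bool) (a : Fin L → Bool) :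
    (∀ j : Fin L, ∀ c : Bool, u j = some c → a j = c) ↔
      (List.ofFn (fun j => [lit (a j), Letter3.hash])).flatten <+
        (List.ofFn (fun j => e (u j))).flatten := by
  simp only [e_eq_ePrefix_append, ← singleton_lit_sublist_ePrefix_iff]
  exact (List.flatten_ofFn_append_singleton_sublist_iff (p := fun j => [lit (a j)])
    fun j => hash_not_mem_ePrefix (u j)).symm
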